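/- arXiv:2108.13232 — 4 statements merged into one kernel-verified Lean document; each statement's English description precedes it below -/
import Mathlib

section
/- Let G be a median graph on vertex set V and let Y ⊆ V be a 1-connected median subalgebra. Then any two points y, y' ∈ Y can be joined by a path of G all of whose vertices lie in Y and whose length equals the graph distance dist(y, y'). In particular, Y is isometrically embedded: the distance in the induced subgraph on Y between any two points of Y equals their graph distance in G. -/
/-- `m` is a median function for the graph `G`: `G` is connected and for all
`x y z` the vertex `m x y z` is the unique vertex lying (metrically) between
each pair among `x, y, z`. -/
def IsMedianFn {V : Type*} (G : SimpleGraph V) (m : V → V → V → V) : Prop :=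
  G.Connected ∧ ∀ x y z : V,
    (G.dist x (m x y z) + G.dist (m x y z) y = G.dist x y ∧
     G.dist y (m x y z) + G.dist (m x y z) z = G.dist y z ∧
     G.dist x (m x y z) + G.dist (m x y z) z = G.dist x z) ∧
    ∀ w : V,
      (G.dist x w + G.dist w y = G.dist x y ∧
       G.dist y w + G.dist w z = G.dist y z ∧
       G.dist x w + G.dist w z = G.dist x z) → w = m x y z

/-- `Y` is a median subalgebra: it is closed under the median operation. -/
def IsSubalgebra {V : Type*} (m : V → V → V → V) (Y : Set V) : Prop :=
  ∀ x ∈ Y, ∀ y ∈ Y, ∀ z ∈ Y, m x y z ∈ Y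

/-- `A` is `C`-connected: any two points of `A` are joined by a finite sequence
of points of `A` with consecutive points at graph distance at most `C`. -/
def CConnected {V : Type*} (G : SimpleGraph V) (C : ℕ) (A : Set V) : Prop :=
  ∀ x ∈ A, ∀ y ∈ A, ∃ (n : ℕ) (p : ℕ → V), p 0 = x ∧ p n = y ∧
    (∀ i ≤ n, p i ∈ A) ∧ ∀ i < n, G.dist (p i) (p (i + 1)) ≤ C

/-- The `r`-neighbourhood of `A` in the graph metric. -/
def Nbhd {V : Type*} (G : SimpleGraph V) (A : Set V) (r : ℕ) : Set V :=
  {v | ∃ a ∈ A, G.dist v a ≤ r}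

/-- `G` has cube dimension at most `R`: any isometrically embedded
`n`-dimensional Hamming cube has `n ≤ R`. -/
def CubeDimLE {V : Type*} (G : SimpleGraph V) (R : ℕ) : Prop :=
  ∀ (n : ℕ) (f : (Fin n → Bool) → V),
    (∀ a b, G.dist (f a) (f b) = hammingDist a b) → n ≤ R

/-- The median subalgebra generated by `A`. -/
def MedianSpan {V : Type*} (m : V → V → V → V) (A : Set V) : Set V :=
  ⋂₀ {Y : Set V | A ⊆ Y ∧ IsSubalgebra m Y}

/-- `Z` is (metrically) convex in `G`: every vertex on a geodesic between two
points of `Z` belongs to `Z`. -/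
def GraphConvex {V : Type*} (G : SimpleGraph V) (Z : Set V) : Prop :=
  ∀ x ∈ Z, ∀ y ∈ Z, ∀ w : V, G.dist x w + G.dist w y = G.dist x y → w ∈ Z

/-- The convex hull of `A`: the intersection of all convex sets containing `A`. -/
def ConvexHullG {V : Type*} (G : SimpleGraph V) (A : Set V) : Set V :=
  ⋂₀ {Z : Set V | GraphConvex G Z ∧ A ⊆ Z}

/-!
Let `H` be the subgraph induced on `Y`. Since a walk of `H` is a walk of `G`, only
`H.dist a b ≤ G.dist a b` needs proof; we argue by strong induction on `H.dist a b`. In a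
median graph the distances to any vertex `b` from two adjacent vertices differ by exactly one,
because the median of the three vertices is one of the two adjacent ones. Let `p` be a
neighbour of `a` in `H` that is closer to `b` in `H`. If `p` is also closer to `b` in `G`, we are
done. Otherwise `a` lies between `p` and `b`. Let `q` be a neighbour of `p` in `H` that is closer
to `b` in `H`. Then `q` and `a` are equally far from `b`, and the median `m a q b ∈ Y` is a common
neighbour of `a` and `q` that is one step closer to `b`, so induction applies to it.
-/

namespace SimpleGraph

variable {V W : Type*} {G : SimpleGraph V} {H : SimpleGraph W}

lemma Reachable.dist_map_le (f : H →g G) {u v : W} (h : H.Reachable u v) :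
    G.dist (f u) (f v) ≤ H.dist u v := by
  obtain ⟨w, hw⟩ := h.exists_walk_length_eq_dist
  exact hw ▸ (G.dist_le (w.map f)).trans_eq (w.length_map f)

lemma Reachable.exists_adj_dist_lt {u v : V} (h : G.Reachable u v) (hne : u ≠ v) :
    ∃ w, G.Adj u w ∧ G.dist w v < G.dist u v := by
  obtain ⟨p, hp⟩ := h.exists_walk_length_eq_dist
  cases p with
  | nil => exact absurd rfl hne
  | cons hadj p =>
    rw [Walk.length_cons] at hp
    exact ⟨_, hadj, (dist_le p).trans_lt (by omega)⟩

lemma Adj.dist_le_dist_add_one {u v : V} (hadj : G.Adj u v) (w : V) :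
    G.dist u w ≤ G.dist v w + 1 := by
  have := hadj.reachable.dist_triangle_left w
  rw [dist_eq_one_iff_adj.mpr hadj] at this
  omega

end SimpleGraph

open SimpleGraph

namespace IsMedianFn

variable {V : Type*} {G : SimpleGraph V} {m : V → V → V → V}

lemma dist_eq_add_one_or_of_adj (hm : IsMedianFn G m) {a p : V} (hap : G.Adj a p) (b : V) :
    G.dist a b = G.dist p b + 1 ∨ G.dist p b = G.dist a b + 1 := by
  obtain ⟨⟨hap', hpb, hab⟩, -⟩ := hm.2 a p b
  have hdist : G.dist a p = 1 := dist_eq_one_iff_adj.mpr hap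
  rcases Nat.eq_zero_or_pos (G.dist a (m a p b)) with h | h
  · rw [← hm.1.dist_eq_zero_iff.mp h] at hpb
    have hpa : G.dist p a = 1 := dist_eq_one_iff_adj.mpr hap.symm
    omega
  · have hmp : m a p b = p := hm.1.dist_eq_zero_iff.mp (by omega)
    rw [hmp] at hab
    omega

lemma adj_median_of_dist_eq (hm : IsMedianFn G m) {a q b : V} (hne : a ≠ q)
    (haq : G.dist a q ≤ 2) (hb : G.dist q b = G.dist a b) :
    G.Adj a (m a q b) ∧ G.Adj (m a q b) q ∧ G.dist (m a q b) b + 1 = G.dist a b := by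
  obtain ⟨⟨has, hqs, hsb⟩, -⟩ := hm.2 a q b
  set s := m a q b
  -- `s` is as far from `a` as from `q`, and these two distances add up to `dist a q ≤ 2`.
  have hsq : G.dist s q = G.dist a s := by rw [dist_comm]; omega
  have has_pos : 0 < G.dist a s := by
    refine Nat.pos_of_ne_zero fun h => hne ?_
    rw [h] at hsq
    exact (hm.1.dist_eq_zero_iff.mp h).trans (hm.1.dist_eq_zero_iff.mp hsq)
  refine ⟨dist_eq_one_iff_adj.mp ?_, dist_eq_one_iff_adj.mp ?_, ?_⟩ <;> omega

end IsMedianFn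

section

variable {V : Type*} {G : SimpleGraph V} {m : V → V → V → V} {Y : Set V}

lemma CConnected.induce_preconnected (hG : G.Connected) (hY : CConnected G 1 Y) :
    (G.induce Y).Preconnected := by
  rintro ⟨a, ha⟩ ⟨b, hb⟩
  obtain ⟨n, p, rfl, rfl, hpY, hp⟩ := hY a ha b hb
  suffices ∀ i (hi : i ≤ n), (G.induce Y).Reachable ⟨p 0, ha⟩ ⟨p i, hpY i hi⟩ from this n le_rfl
  intro i
  induction i with
  | zero => exact fun _ => .rfl
  | succ i ih =>
    intro hi
    refine (ih (by omega)).trans ?_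
    rcases Nat.le_one_iff_eq_zero_or_eq_one.mp (hp i (by omega)) with h | h
    · simp only [hG.dist_eq_zero_iff.mp h]
      rfl
    · exact (induce_adj.mpr (dist_eq_one_iff_adj.mp h) : (G.induce Y).Adj _ _).reachable

lemma IsSubalgebra.induce_dist_eq (hm : IsMedianFn G m) (hsub : IsSubalgebra m Y)
    (hY : (G.induce Y).Preconnected) (a b : Y) :
    (G.induce Y).dist a b = G.dist a b := by
  set H := G.induce Y
  have hge : ∀ a : Y, G.dist a b ≤ H.dist a b := fun a =>
    (hY a b).dist_map_le (Embedding.induce Y).toHom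
  refine le_antisymm ?_ (hge a)
  induction hn : H.dist a b using Nat.strong_induction_on generalizing a with
  | _ n ih =>
  subst hn
  have ih' : ∀ a' : Y, H.dist a' b < H.dist a b → H.dist a' b = G.dist a' b :=
    fun a' h => le_antisymm (ih _ h a' rfl) (hge a')
  by_cases hab : a = b
  · simp [hab]
  obtain ⟨p, hap, hpb⟩ := (hY a b).exists_adj_dist_lt hab
  have hp := ih' p hpb
  rcases hm.dist_eq_add_one_or_of_adj (induce_adj.mp hap) b with hcloser | hfarther
  · have := hap.dist_le_dist_add_one b
    omega
  have hpb_ne : p ≠ b := by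
    rintro rfl
    simp at hfarther
  obtain ⟨q, hpq, hqb⟩ := (hY p b).exists_adj_dist_lt hpb_ne
  have hq := ih' q (hqb.trans hpb)
  have hqb_eq : G.dist q b = G.dist a b := by
    have := (induce_adj.mp hpq).dist_le_dist_add_one b
    omega
  by_cases haq : a = q
  · rw [haq, hq, hqb_eq]
  have haq_le : G.dist a q ≤ 2 := by
    have := (induce_adj.mp hap).dist_le_dist_add_one q
    rw [dist_eq_one_iff_adj.mpr (induce_adj.mp hpq)] at this
    omega
  obtain ⟨has, hsq, hsb⟩ :=
    hm.adj_median_of_dist_eq (Subtype.coe_ne_coe.mpr haq) haq_le hqb_eq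
  set s : Y := ⟨m a q b, hsub a a.2 q q.2 b b.2⟩
  replace hsb : G.dist s b + 1 = G.dist a b := hsb
  have hs : H.dist s b = G.dist s b := by
    refine ih' s ?_
    have := (show H.Adj s q from hsq).dist_le_dist_add_one b
    omega
  have := (show H.Adj a s from has).dist_le_dist_add_one b
  omega

end

/-- A 1-connected median subalgebra of a median graph is isometrically
embedded: any two of its points are joined by a geodesic of `G` lying in `Y`,
and the induced-subgraph distance agrees with the ambient distance. -/
theorem stmt0 {V : Type*} (G : SimpleGraph V) (m : V → V → V → V)
    (hm : IsMedianFn G m) (Y : Set V) (hsub : IsSubalgebra m Y)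
    (hconn : CConnected G 1 Y) (y y' : V) (hy : y ∈ Y) (hy' : y' ∈ Y) :
    (∃ w : G.Walk y y', w.length = G.dist y y' ∧ ∀ v ∈ w.support, v ∈ Y) ∧
    (G.induce Y).dist ⟨y, hy⟩ ⟨y', hy'⟩ = G.dist y y' := by
  have hY := hconn.induce_preconnected hm.1
  have hdist := hsub.induce_dist_eq hm hY ⟨y, hy⟩ ⟨y', hy'⟩
  obtain ⟨w, hw⟩ := (hY ⟨y, hy⟩ ⟨y', hy'⟩).exists_walk_length_eq_dist
  refine ⟨⟨w.map (Embedding.induce Y).toHom, (w.length_map _).trans (hw.trans hdist), ?_⟩, hdist⟩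
  intro v hv
  obtain ⟨x, -, rfl⟩ := List.mem_map.mp ((w.support_map (Embedding.induce Y).toHom) ▸ hv)
  exact x.2
end

section
/- Let G be a median graph on vertex set V with cube dimension at most d, let R be a natural number, and let Z_1, …, Z_n (with n ≥ 1) be nonempty convex subsets of V that are pairwise R-close, meaning that for all i, j there exist z ∈ Z_i and z' ∈ Z_j with dist(z, z') ≤ R. Then there is a vertex g ∈ V with dist(g, Z_i) ≤ dR for every i. -/
namespace MG

variable {V : Type*} {G : SimpleGraph V} {m : V → V → V → V}

/-- one halfspace of the wall through edge `a b`. -/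
def Wside (G : SimpleGraph V) (a b : V) : Set V := {z | G.dist z b = G.dist z a + 1}

def IsHalf (G : SimpleGraph V) (h : Set V) : Prop := ∃ a b, G.dist a b = 1 ∧ h = Wside G a b

def sep (G : SimpleGraph V) (u w : V) : Set (Set V) := {h | IsHalf G h ∧ u ∈ h ∧ w ∉ h}

lemma dc (G : SimpleGraph V) (u v : V) : G.dist u v = G.dist v u := SimpleGraph.dist_comm

lemma mem_Wside {a b z : V} : z ∈ Wside G a b ↔ G.dist z b = G.dist z a + 1 := Iff.rfl

lemma wall_not_both {a b : V} (z : V) (h1 : z ∈ Wside G a b) (h2 : z ∈ Wside G b a) : False := by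
  rw [mem_Wside] at h1 h2; omega

section basic
variable (hm : IsMedianFn G m)
include hm

lemma conn : G.Connected := hm.1

lemma dist0 {u v : V} (h : G.dist u v = 0) : u = v := (hm.1.dist_eq_zero_iff).mp h

lemma tri (u v w : V) : G.dist u w ≤ G.dist u v + G.dist v w := hm.1.dist_triangle

lemma med_btw1 (x y z : V) : G.dist x (m x y z) + G.dist (m x y z) y = G.dist x y :=
  ((hm.2 x y z).1).1

lemma med_btw2 (x y z : V) : G.dist y (m x y z) + G.dist (m x y z) z = G.dist y z :=
  ((hm.2 x y z).1).2.1

lemma med_btw3 (x y z : V) : G.dist x (m x y z) + G.dist (m x y z) z = G.dist x z :=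
  ((hm.2 x y z).1).2.2

lemma med_unique {x y z w : V}
    (h1 : G.dist x w + G.dist w y = G.dist x y)
    (h2 : G.dist y w + G.dist w z = G.dist y z)
    (h3 : G.dist x w + G.dist w z = G.dist x z) : w = m x y z :=
  (hm.2 x y z).2 w ⟨h1, h2, h3⟩

/-- adjacent vertices never equidistant from z (bipartite-type parity). -/
lemma parity {x y : V} (hxy : G.dist x y = 1) (z : V) : G.dist z x ≠ G.dist z y := by
  intro he
  have h1 := med_btw1 hm x y z
  have h2 := med_btw2 hm x y z
  have h3 := med_btw3 hm x y z
  rw [hxy] at h1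
  have hcase : G.dist x (m x y z) = 0 ∨ G.dist (m x y z) y = 0 := by omega
  rcases hcase with h0 | h0
  · have hx : x = m x y z := dist0 hm h0
    rw [← hx] at h2
    rw [dc G y x, hxy] at h2
    rw [dc G z x, dc G z y] at he
    omega
  · have hy : m x y z = y := dist0 hm h0
    rw [hy] at h3
    rw [dc G z x, dc G z y] at he
    omega

/-- dichotomy for a wall. -/
lemma wall_split {a b : V} (hab : G.dist a b = 1) (z : V) :
    z ∈ Wside G a b ∨ z ∈ Wside G b a := by
  have hne := parity hm hab z
  have t1 := tri hm z a b
  have t2 := tri hm z b a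
  rw [hab] at t1
  rw [dc G b a, hab] at t2
  rw [mem_Wside, mem_Wside]
  omega

lemma not_Wside_iff {a b : V} (hab : G.dist a b = 1) (z : V) :
    z ∉ Wside G a b ↔ z ∈ Wside G b a := by
  constructor
  · intro h; rcases wall_split hm hab z with h' | h'
    · exact absurd h' h
    · exact h'
  · intro h h'; exact wall_not_both z h' h

end basic
section geo
variable (hm : IsMedianFn G m)
include hm

/-- geodesic as a function with exact pairwise distances -/
lemma exists_geodesic (u v : V) :
    ∃ c : ℕ → V, c 0 = u ∧ c (G.dist u v) = v ∧
      ∀ i j, i ≤ j → j ≤ G.dist u v → G.dist (c i) (c j) = j - i := by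
  obtain ⟨p, hp⟩ := (conn hm).exists_walk_length_eq_dist u v
  refine ⟨fun i => p.getVert i, p.getVert_zero, by rw [← hp]; exact p.getVert_length, ?_⟩
  have step : ∀ i, i < G.dist u v → G.dist (p.getVert i) (p.getVert (i+1)) = 1 := by
    intro i hi
    exact SimpleGraph.dist_eq_one_iff_adj.mpr (p.adj_getVert_succ (by omega))
  have upper : ∀ n i, i + n ≤ G.dist u v →
      G.dist (p.getVert i) (p.getVert (i+n)) ≤ n := by
    intro n
    induction n with
    | zero => intro i _; simp [SimpleGraph.dist_self]
    | succ n ih =>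
      intro i hin
      have h1 := ih i (by omega)
      have h2 := step (i+n) (by omega)
      have := tri hm (p.getVert i) (p.getVert (i+n)) (p.getVert (i+n+1))
      calc G.dist (p.getVert i) (p.getVert (i+(n+1)))
          ≤ G.dist (p.getVert i) (p.getVert (i+n)) + G.dist (p.getVert (i+n)) (p.getVert (i+n+1)) := by
            rw [show i+(n+1) = i+n+1 by omega] at *; exact this
        _ ≤ n + 1 := by omega
  intro i j hij hj
  have h1 : G.dist (p.getVert i) (p.getVert j) ≤ j - i := by
    have := upper (j - i) i (by omega)
    rw [show i + (j-i) = j by omega] at this; exact this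
  have h2 : G.dist u (p.getVert i) ≤ i := by
    have := upper i 0 (by omega); simpa using this
  have h3 : G.dist (p.getVert j) v ≤ G.dist u v - j := by
    have := upper (G.dist u v - j) j (by omega)
    rw [show j + (G.dist u v - j) = G.dist u v by omega] at this
    rw [← hp] at this
    rw [p.getVert_length] at this
    rw [hp] at this; exact this
  have t1 := tri hm u (p.getVert i) v
  have t2 := tri hm (p.getVert i) (p.getVert j) v
  show G.dist (p.getVert i) (p.getVert j) = j - i
  omega

/-- neighbor towards a target -/
lemma exists_step {u a : V} (h : 1 ≤ G.dist u a) :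
    ∃ u', G.dist u u' = 1 ∧ G.dist u' a = G.dist u a - 1 := by
  obtain ⟨c, hc0, hck, hc⟩ := exists_geodesic hm u a
  refine ⟨c 1, ?_, ?_⟩
  · have := hc 0 1 (by omega) (by omega); rw [hc0] at this; simpa using this
  · have := hc 1 (G.dist u a) (by omega) (le_refl _); rw [hck] at this; exact this

end geo

lemma exists_flip {P : ℕ → Prop} : ∀ {k : ℕ}, P 0 → ¬ P k → ∃ i, i < k ∧ P i ∧ ¬ P (i+1) := by
  intro k
  induction k with
  | zero => intro h0 hk; exact absurd h0 hk
  | succ k ih =>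
    intro h0 hk
    by_cases hPk : P k
    · exact ⟨k, Nat.lt_succ_self k, hPk, hk⟩
    · obtain ⟨i, hi, h1, h2⟩ := ih h0 hPk
      exact ⟨i, by omega, h1, h2⟩


section squares
variable (hm : IsMedianFn G m)
include hm

lemma pair2 {x w w' : V} (e : G.dist x w = 1) (e' : G.dist x w' = 1) (hne : w ≠ w') :
    G.dist w w' = 2 := by
  have t := tri hm w x w'
  have c1 := dc G w x
  have h2 : G.dist w w' ≤ 2 := by omega
  have h01 : G.dist w w' = 0 ∨ G.dist w w' = 1 ∨ G.dist w w' = 2 := by omega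
  rcases h01 with h | h | h
  · exact absurd (dist0 hm h) hne
  · have := parity hm h x; omega
  · exact h

lemma K23 {x u w1 w2 w3 : V} (hxu : x ≠ u)
    (e1 : G.dist x w1 = 1) (e2 : G.dist x w2 = 1) (e3 : G.dist x w3 = 1)
    (f1 : G.dist w1 u = 1) (f2 : G.dist w2 u = 1) (f3 : G.dist w3 u = 1)
    (g12 : w1 ≠ w2) (g13 : w1 ≠ w3) (g23 : w2 ≠ w3) : False := by
  have d12 : G.dist w1 w2 = 2 := pair2 hm e1 e2 g12
  have d13 : G.dist w1 w3 = 2 := pair2 hm e1 e3 g13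
  have d23 : G.dist w2 w3 = 2 := pair2 hm e2 e3 g23
  have cx1 := dc G x w1; have cx2 := dc G x w2; have cx3 := dc G x w3
  have cu1 := dc G w1 u; have cu2 := dc G w2 u; have cu3 := dc G w3 u
  have hx : x = m w1 w2 w3 :=
    med_unique hm (by omega) (by omega) (by omega)
  have hu : u = m w1 w2 w3 :=
    med_unique hm (by omega) (by omega) (by omega)
  exact hxu (hx.trans hu.symm)

lemma common_nbrs {x u x' x1 : V} (hxu : x ≠ u) (hne : x' ≠ x1)
    (ex' : G.dist x x' = 1) (fx' : G.dist x' u = 1)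
    (ex1 : G.dist x x1 = 1) (fx1 : G.dist x1 u = 1) :
    ∀ w, G.dist x w = 1 → G.dist w u = 1 → w = x' ∨ w = x1 := by
  intro w hw1 hw2
  by_contra hc
  push_neg at hc
  exact K23 hm hxu ex' ex1 hw1 fx' fx1 hw2 hne hc.1.symm hc.2.symm

lemma square_lemma {x x' x1 u : V}
    (ex' : G.dist x x' = 1) (ex1 : G.dist x x1 = 1)
    (fx' : G.dist x' u = 1) (fx1 : G.dist x1 u = 1)
    (hdiag : G.dist x u = 2) (hdiag' : G.dist x' x1 = 2) :
    ∀ z, z ∈ Wside G x x' ↔ z ∈ Wside G x1 u := by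
  have hxu : x ≠ u := by intro h; rw [h, SimpleGraph.dist_self] at hdiag; omega
  have hne : x' ≠ x1 := by intro h; rw [h, SimpleGraph.dist_self] at hdiag'; omega
  have hcn := common_nbrs hm hxu hne ex' fx' ex1 fx1
  have hcn' : ∀ w, G.dist x' w = 1 → G.dist w x1 = 1 → w = x ∨ w = u := by
    have h1 := dc G x x'; have h2 := dc G x x1; have h3 := dc G x' u; have h4 := dc G x1 u
    exact common_nbrs hm hne (by intro h; exact hxu h)
      (by omega) (by omega) (by omega) (by omega)
  intro z
  -- abbreviations for the medians
  have b1 := med_btw1 hm x u z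
  have b2 := med_btw2 hm x u z
  have b3 := med_btw3 hm x u z
  rw [hdiag] at b1
  have hcase : G.dist x (m x u z) = 0 ∨ G.dist (m x u z) u = 0 ∨
      (G.dist x (m x u z) = 1 ∧ G.dist (m x u z) u = 1) := by omega
  -- dc facts
  have c1 := dc G z x; have c2 := dc G z x'; have c3 := dc G z x1; have c4 := dc G z u
  have t1 := tri hm z x x'; have t2 := tri hm z x x1
  have t3 := tri hm z u x'; have t4 := tri hm z u x1
  have t5 := tri hm z x' x; have t6 := tri hm z x1 x
  have t7 := tri hm z x' u; have t8 := tri hm z x1 u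
  have cxx' := dc G x x'; have cxx1 := dc G x x1
  have cx'u := dc G x' u; have cx1u := dc G x1 u
  -- the ν-median analysis, used twice below
  have nu : ¬ (G.dist z x' = G.dist z x1 ∧ G.dist z u = G.dist z x1 + 1 ∧
      G.dist z x1 + 1 = G.dist z x) := by
    rintro ⟨hA, hB, hC⟩
    have n1 := med_btw1 hm x' x1 z
    have n2 := med_btw2 hm x' x1 z
    have n3 := med_btw3 hm x' x1 z
    rw [hdiag'] at n1
    have hνcase : G.dist x' (m x' x1 z) = 0 ∨ G.dist (m x' x1 z) x1 = 0 ∨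
        (G.dist x' (m x' x1 z) = 1 ∧ G.dist (m x' x1 z) x1 = 1) := by omega
    rcases hνcase with h0 | h0 | ⟨ha, hb⟩
    · have hxeq : x' = m x' x1 z := dist0 hm h0
      rw [← hxeq] at n2 n3
      -- n2 : d x1 x' + d x' z = d x1 z
      have := dc G x1 x'; omega
    · have hxeq : m x' x1 z = x1 := dist0 hm h0
      rw [hxeq] at n3
      omega
    · rcases hcn' (m x' x1 z) ha hb with hv | hv <;> rw [hv] at n2 n3
      · -- ν = x : n3 : d x' x + d x z = d x' z
        omega
      · omega
  rcases hcase with h0 | h0 | ⟨ha, hb⟩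
  · -- μ = x
    have hxeq : x = m x u z := dist0 hm h0
    rw [← hxeq] at b2 b3
    -- b2 : d u x + d x z = d u z
    have cux := dc G u x
    rw [mem_Wside, mem_Wside]
    omega
  · -- μ = u
    have hueq : m x u z = u := dist0 hm h0
    rw [hueq] at b2 b3
    rw [mem_Wside, mem_Wside]
    omega
  · rcases hcn (m x u z) ha hb with hv | hv <;> rw [hv] at b2 b3
    · -- μ = x' ; b3 : d x x' + d x' z = d x z ; b2 : d u x' + d x' z = d u z
      have cux' := dc G u x'
      rw [mem_Wside, mem_Wside]
      constructor
      · intro h; omega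
      · intro h
        -- h : d z u = d z x1 + 1 ; derived: d z x' = d z x - 1, d z u = d z x' + 1
        -- so d z x1 = d z x', contradiction via nu
        exfalso; apply nu; omega
    · -- μ = x1 ; b3 : d x x1 + d x1 z = d x z ; b2 : d u x1 + d x1 z = d u z
      have cux1 := dc G u x1
      rw [mem_Wside, mem_Wside]
      constructor
      · intro h; omega
      · intro h
        by_cases hz : G.dist z x' = G.dist z x + 1
        · exact hz
        · exfalso
          have hsplit := wall_split hm ex' z
          rw [mem_Wside, mem_Wside] at hsplit
          apply nu
          omega

end squares

section transfer
variable (hm : IsMedianFn G m)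
include hm

/-- Edges crossing the same wall determine the same halfspace. -/
lemma wall_transfer : ∀ (t : ℕ) {a b x x' : V}, G.dist a b = 1 → G.dist x x' = 1 →
    x ∈ Wside G a b → x' ∈ Wside G b a → G.dist x a = t →
    ∀ z, (z ∈ Wside G a b ↔ z ∈ Wside G x x') := by
  intro t
  induction t using Nat.strong_induction_on with
  | _ t ih =>
    intro a b x x' hab hxx' hx hx' hxa
    rw [mem_Wside] at hx hx'
    have cab := dc G a b; have cxx' := dc G x x'
    have cxa := dc G x a; have cxb := dc G x b
    have cx'a := dc G x' a; have cx'b := dc G x' b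
    have t1 := tri hm x' x a; have t2 := tri hm x a b
    have t3 := tri hm x x' b; have t4 := tri hm x' x b
    have t5 := tri hm x x' a
    have hx'b : G.dist x' b = t := by omega
    have hx'a : G.dist x' a = t + 1 := by omega
    have hxb : G.dist x b = t + 1 := by omega
    rcases Nat.eq_zero_or_pos t with ht0 | htpos
    · -- base case : x = a, x' = b
      have hxa' : x = a := by apply dist0 hm; omega
      have hx'b' : x' = b := by apply dist0 hm; omega
      subst hxa'; subst hx'b'; exact fun z => Iff.rfl
    · -- step
      obtain ⟨x1, hxx1, hx1a⟩ := exists_step hm (u := x) (a := a) (by omega)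
      rw [hxa] at hx1a
      have cx1a := dc G x1 a; have cx1b := dc G x1 b; have cxx1 := dc G x x1
      have t6 := tri hm x1 a b; have t7 := tri hm x x1 b
      have hx1b : G.dist x1 b = t := by omega
      -- x1 and x' are distinct, at distance 2
      have hne : x1 ≠ x' := by
        intro h; rw [h] at hx1b hx1a; omega
      have hd2 : G.dist x1 x' = 2 := pair2 hm (by omega) hxx' hne
      -- u := median of x1 x' b
      have b1 := med_btw1 hm x1 x' b
      have b2 := med_btw2 hm x1 x' b
      have b3 := med_btw3 hm x1 x' b
      rw [hd2] at b1
      set u := m x1 x' b with hu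
      have cx1u := dc G x1 u; have cux' := dc G u x'; have cub := dc G u b
      have cx'u := dc G x' u
      have hx1u : G.dist x1 u = 1 := by omega
      have hux' : G.dist u x' = 1 := by omega
      have hub : G.dist u b = t - 1 := by omega
      have t8 := tri hm u x' a; have t9 := tri hm u x1 a
      have t10 := tri hm u a b
      have t11 := tri hm x' u a
      have hua : G.dist u a = t := by omega
      -- apply induction hypothesis to the edge (x1, u)
      have hIH := ih (t-1) (by omega) hab hx1u
        (by rw [mem_Wside]; omega) (by rw [mem_Wside]; omega) (by omega)
      -- apply the square lemma to the square x, x', u, x1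
      have hdiagxu : G.dist x u = 2 := by
        have hc : G.dist x u ≤ 2 := by have := tri hm x x1 u; omega
        have h01 : G.dist x u = 0 ∨ G.dist x u = 1 ∨ G.dist x u = 2 := by omega
        rcases h01 with h | h | h
        · exfalso; have := dist0 hm h; rw [← this] at hub; omega
        · exfalso; have := parity hm h a; rw [dc G a x, dc G a u] at this
          rw [hxa] at this; rw [hua] at this; exact this rfl
        · exact h
      have cx1x' := dc G x1 x'
      have hd2' : G.dist x' x1 = 2 := by omega
      have hsq := square_lemma hm hxx' hxx1 (by omega) (by omega) hdiagxu hd2' 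
      intro z
      rw [hIH z, hsq z]

end transfer

section halfspaces
variable (hm : IsMedianFn G m)
include hm

/-- point on geodesic from x to w extends to y when w is between x and y -/
lemma btw_trans {x w y s : V} (hw : G.dist x w + G.dist w y = G.dist x y)
    (hs : G.dist x s + G.dist s w = G.dist x w) :
    G.dist s y = G.dist s w + G.dist w y := by
  have t1 := tri hm s w y
  have t2 := tri hm x s y
  omega

lemma Wside_convex {a b : V} (hab : G.dist a b = 1) : GraphConvex G (Wside G a b) := by
  intro x hx y hy w hw
  by_contra hwn
  rw [not_Wside_iff hm hab] at hwn
  obtain ⟨c, hc0, hck, hc⟩ := exists_geodesic hm x w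
  set k1 := G.dist x w with hk1
  have hflip : ∃ i, i < k1 ∧ (c i ∈ Wside G a b) ∧ ¬ (c (i+1) ∈ Wside G a b) := by
    apply exists_flip
    · rw [hc0]; exact hx
    · intro h; rw [hck] at h; exact wall_not_both w h hwn
  obtain ⟨i, hik, hPi, hPi1⟩ := hflip
  rw [not_Wside_iff hm hab] at hPi1
  have hedge : G.dist (c i) (c (i+1)) = 1 := by
    have := hc i (i+1) (by omega) (by omega); omega
  have htrans := wall_transfer hm (G.dist (c i) a) hab hedge hPi hPi1 rfl
  -- y is in Wside a b, so y ∈ Wside (c i) (c (i+1))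
  have hy' := (htrans y).mp hy
  rw [mem_Wside] at hy'
  -- but c (i+1) is strictly closer to y than c i
  have hci : G.dist x (c i) = i := by have := hc 0 i (by omega) (by omega); rw [hc0] at this; omega
  have hci1 : G.dist x (c (i+1)) = i+1 := by
    have := hc 0 (i+1) (by omega) (by omega); rw [hc0] at this; omega
  have hciw : G.dist x (c i) + G.dist (c i) w = G.dist x w := by
    have := hc i k1 (by omega) (le_refl _); rw [hck] at this; omega
  have hci1w : G.dist x (c (i+1)) + G.dist (c (i+1)) w = G.dist x w := by
    have := hc (i+1) k1 (by omega) (le_refl _); rw [hck] at this; omega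
  have h1 := btw_trans hm hw hciw
  have h2 := btw_trans hm hw hci1w
  have e1 := dc G y (c i); have e2 := dc G y (c (i+1))
  omega

lemma IsHalf_convex {h : Set V} (hh : IsHalf G h) : GraphConvex G h := by
  obtain ⟨a, b, hab, rfl⟩ := hh
  exact Wside_convex hm hab

lemma IsHalf_compl {h : Set V} (hh : IsHalf G h) : IsHalf G hᶜ := by
  obtain ⟨a, b, hab, rfl⟩ := hh
  refine ⟨b, a, by rw [dc G b a]; exact hab, ?_⟩
  ext z
  simp only [Set.mem_compl_iff]
  rw [not_Wside_iff hm hab]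

lemma compl_Wside {a b : V} (hab : G.dist a b = 1) : (Wside G a b)ᶜ = Wside G b a := by
  ext z
  simp only [Set.mem_compl_iff]
  rw [not_Wside_iff hm hab]

end halfspaces


section separation
variable (hm : IsMedianFn G m)
include hm

lemma sep_enum (u w : V) : ∃ e : Fin (G.dist u w) → Set V,
    Function.Injective e ∧ Set.range e = sep G u w := by
  obtain ⟨c, hc0, hck, hc⟩ := exists_geodesic hm u w
  refine ⟨fun i => Wside G (c i) (c (i+1)), ?_, ?_⟩
  · -- injectivity
    have key : ∀ i j : Fin (G.dist u w), (i:ℕ) < j →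
        Wside G (c i) (c (i+1)) ≠ Wside G (c j) (c (j+1)) := by
      intro i j hij hEq
      have h1 : (c j) ∈ Wside G (c j) (c (j+1)) := by
        rw [mem_Wside, SimpleGraph.dist_self]
        have := hc j (j+1) (by omega) (by omega); omega
      rw [← hEq, mem_Wside] at h1
      have h2 : G.dist (c (i+1)) (c j) = j - (i+1) := hc (i+1) j (by omega) (by omega)
      have h3 : G.dist (c i) (c j) = j - i := hc i j (by omega) (by omega)
      rw [dc G (c j) (c (i+1)), dc G (c j) (c i)] at h1
      omega
    intro i j hEq
    rcases lt_trichotomy (i:ℕ) (j:ℕ) with h | h | h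
    · exact absurd hEq (key i j h)
    · exact Fin.ext h
    · exact absurd hEq.symm (key j i h)
  · apply Set.eq_of_subset_of_subset
    · rintro h ⟨i, rfl⟩
      have hedge : G.dist (c i) (c (i+1)) = 1 := by
        have := hc i (i+1) (by omega) (by omega); omega
      refine ⟨⟨c i, c (i+1), hedge, rfl⟩, ?_, ?_⟩
      · rw [mem_Wside]
        have h1 : G.dist u (c (i+1)) = i+1-0 := by
          have := hc 0 (i+1) (by omega) (by omega); rw [hc0] at this; exact this
        have h2 : G.dist u (c i) = i-0 := by
          have := hc 0 i (by omega) (by omega); rw [hc0] at this; exact this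
        omega
      · rw [mem_Wside]
        have h1 : G.dist (c (i+1)) w = G.dist u w - (i+1) := by
          have := hc (i+1) (G.dist u w) (by omega) (by omega); rw [hck] at this; exact this
        have h2 : G.dist (c i) w = G.dist u w - i := by
          have := hc i (G.dist u w) (by omega) (by omega); rw [hck] at this; exact this
        have d1 := dc G w (c (i+1)); have d2 := dc G w (c i)
        intro hmem
        omega
    · rintro h ⟨⟨a, b, hab, rfl⟩, hu, hw⟩
      rw [not_Wside_iff hm hab] at hw
      have hflip : ∃ i, i < G.dist u w ∧ (c i ∈ Wside G a b) ∧ ¬ (c (i+1) ∈ Wside G a b) := by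
        apply exists_flip
        · rw [hc0]; exact hu
        · intro hcon; rw [hck] at hcon; exact wall_not_both w hcon hw
      obtain ⟨i, hik, hPi, hPi1⟩ := hflip
      rw [not_Wside_iff hm hab] at hPi1
      have hedge : G.dist (c i) (c (i+1)) = 1 := by
        have := hc i (i+1) (by omega) (by omega); omega
      have htrans := wall_transfer hm (G.dist (c i) a) hab hedge hPi hPi1 rfl
      refine ⟨⟨i, hik⟩, ?_⟩
      ext z
      exact (htrans z).symm

lemma sep_finite (u w : V) : (sep G u w).Finite := by
  obtain ⟨e, he, hrange⟩ := sep_enum hm u w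
  rw [← hrange]; exact Set.finite_range e

lemma ncard_sep (u w : V) : (sep G u w).ncard = G.dist u w := by
  obtain ⟨e, he, hrange⟩ := sep_enum hm u w
  rw [← hrange, ← Set.image_univ, Set.ncard_image_of_injective _ he, Set.ncard_univ,
    Nat.card_eq_fintype_card, Fintype.card_fin]

omit hm in
lemma sep_disjoint (x w g : V) : Disjoint (sep G x w) (sep G w g) := by
  rw [Set.disjoint_left]
  rintro h ⟨_, _, hw⟩ ⟨_, hw', _⟩
  exact hw hw'

omit hm in
lemma sep_subset_union (x w g : V) : sep G x g ⊆ sep G x w ∪ sep G w g := by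
  rintro h ⟨hh, hx, hg⟩
  by_cases hwh : w ∈ h
  · exact Or.inr ⟨hh, hwh, hg⟩
  · exact Or.inl ⟨hh, hx, hwh⟩

lemma btw_sep_subset {x w g : V} (hb : G.dist x w + G.dist w g = G.dist x g) :
    sep G x w ⊆ sep G x g ∧ sep G w g ⊆ sep G x g := by
  have hcard : (sep G x w ∪ sep G w g).ncard = G.dist x w + G.dist w g := by
    rw [Set.ncard_union_eq (sep_disjoint x w g) (sep_finite hm x w) (sep_finite hm w g),
      ncard_sep hm, ncard_sep hm]
  have hEq : sep G x g = sep G x w ∪ sep G w g := by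
    refine Set.eq_of_subset_of_ncard_le (sep_subset_union x w g) ?_
      ((sep_finite hm x w).union (sep_finite hm w g))
    rw [hcard, ncard_sep hm]
    omega
  rw [hEq]
  exact ⟨Set.subset_union_left, Set.subset_union_right⟩

lemma btw_iff_half {x g w : V} : (G.dist x w + G.dist w g = G.dist x g) ↔
    ∀ h : Set V, IsHalf G h → x ∈ h → g ∈ h → w ∈ h := by
  constructor
  · intro hb h hh hx hg
    by_contra hw
    have := (btw_sep_subset hm hb).1 ⟨hh, hx, hw⟩
    exact this.2.2 hg
  · intro hyp
    have h1 : sep G x w ⊆ sep G x g := by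
      rintro h ⟨hh, hx, hw⟩
      refine ⟨hh, hx, fun hg => hw (hyp h hh hx hg)⟩
    have h2 : sep G w g ⊆ sep G x g := by
      rintro h ⟨hh, hw, hg⟩
      by_cases hx : x ∈ h
      · exact ⟨hh, hx, hg⟩
      · exfalso
        have hc := IsHalf_compl hm hh
        have := hyp hᶜ hc hx hg
        exact this hw
    have hun : sep G x w ∪ sep G w g ⊆ sep G x g := Set.union_subset h1 h2
    have hle : G.dist x w + G.dist w g ≤ G.dist x g := by
      rw [← ncard_sep hm x w, ← ncard_sep hm w g,
        ← Set.ncard_union_eq (sep_disjoint x w g) (sep_finite hm x w) (sep_finite hm w g),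
        ← ncard_sep hm x g]
      exact Set.ncard_le_ncard hun (sep_finite hm x g)
    have := tri hm x w g
    omega

/-- intervals are convex -/
lemma interval_convex (x g : V) :
    GraphConvex G {w | G.dist x w + G.dist w g = G.dist x g} := by
  intro w1 h1 w2 h2 s hs
  rw [Set.mem_setOf_eq, btw_iff_half hm] at h1 h2 ⊢
  intro h hh hx hg
  exact IsHalf_convex hm hh w1 (h1 h hh hx hg) w2 (h2 h hh hx hg) s hs

end separation


section gates
variable (hm : IsMedianFn G m)
include hm

lemma exists_gate {A : Set V} (hA : GraphConvex G A) (hne : A.Nonempty) (x : V) :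
    ∃ p ∈ A, (∀ c ∈ A, G.dist x p + G.dist p c = G.dist x c) ∧
      (∀ c ∈ A, G.dist x p ≤ G.dist x c) := by
  classical
  have hS : {n : ℕ | ∃ c ∈ A, G.dist x c = n}.Nonempty := by
    obtain ⟨c, hc⟩ := hne; exact ⟨G.dist x c, c, hc, rfl⟩
  obtain ⟨p, hp, hpd⟩ : ∃ p ∈ A, G.dist x p = sInf {n : ℕ | ∃ c ∈ A, G.dist x c = n} :=
    Nat.sInf_mem hS
  have hmin : ∀ c ∈ A, G.dist x p ≤ G.dist x c := by
    intro c hc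
    rw [hpd]
    exact Nat.sInf_le ⟨c, hc, rfl⟩
  refine ⟨p, hp, ?_, hmin⟩
  intro c hc
  have b1 := med_btw1 hm x p c
  have b2 := med_btw2 hm x p c
  have b3 := med_btw3 hm x p c
  have hmem : m x p c ∈ A := hA p hp c hc _ b2
  have hge := hmin _ hmem
  have h0 : G.dist (m x p c) p = 0 := by omega
  have := dist0 hm h0
  rw [← this]
  omega

/-- Halfspaces separating a point from its gate are exactly those separating it
from the whole convex set. -/
lemma sep_gate {A : Set V} {x p : V} (hp : p ∈ A)
    (hgate : ∀ c ∈ A, G.dist x p + G.dist p c = G.dist x c) :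
    sep G x p = {h : Set V | IsHalf G h ∧ x ∈ h ∧ h ∩ A = ∅} := by
  ext h
  constructor
  · rintro ⟨hh, hx, hpn⟩
    refine ⟨hh, hx, ?_⟩
    by_contra hcon
    obtain ⟨c, hch, hcA⟩ := Set.nonempty_iff_ne_empty.mpr hcon
    have hsub := (btw_sep_subset hm (hgate c hcA)).1
    exact (hsub ⟨hh, hx, hpn⟩).2.2 hch
  · rintro ⟨hh, hx, hdisj⟩
    refine ⟨hh, hx, fun hcon => ?_⟩
    have : p ∈ h ∩ A := ⟨hcon, hp⟩
    rw [hdisj] at this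
    exact this

/-- Helly property for convex subsets of a median graph. -/
lemma helly {ι : Type*} [DecidableEq ι] :
    ∀ (s : Finset ι), s.Nonempty → ∀ (A : ι → Set V), (∀ i ∈ s, GraphConvex G (A i)) →
    (∀ i ∈ s, ∀ j ∈ s, (A i ∩ A j).Nonempty) → (⋂ i ∈ s, A i).Nonempty := by
  intro s
  induction s using Finset.induction_on with
  | empty => rintro ⟨i, hi⟩; exact absurd hi (Finset.notMem_empty i)
  | @insert a t hat ih =>
    intro _ A hconv hpair
    rcases t.eq_empty_or_nonempty with rfl | htne
    · obtain ⟨z, hz, _⟩ := hpair a (Finset.mem_insert_self a _) a (Finset.mem_insert_self a _)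
      exact ⟨z, by simp [hz]⟩
    · have hmem : ∀ i ∈ t, i ∈ insert a t := fun i hi => Finset.mem_insert_of_mem hi
      have haI : a ∈ insert a t := Finset.mem_insert_self a t
      obtain ⟨g, hg⟩ := ih htne (fun i => A i ∩ A a)
        (fun i hi => by
          intro x hx y hy w hw
          exact ⟨hconv i (hmem i hi) x hx.1 y hy.1 w hw, hconv a haI x hx.2 y hy.2 w hw⟩)
        (fun i hi j hj => by
          obtain ⟨u, hu1, hu2⟩ := hpair i (hmem i hi) j (hmem j hj)
          obtain ⟨v, hv1, hv2⟩ := hpair j (hmem j hj) a haI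
          obtain ⟨w, hw1, hw2⟩ := hpair i (hmem i hi) a haI
          have b1 := med_btw1 hm u v w
          have b2 := med_btw2 hm u v w
          have b3 := med_btw3 hm u v w
          refine ⟨m u v w, ⟨?_, ?_⟩, ?_, ?_⟩
          · exact hconv i (hmem i hi) u hu1 w hw1 _ b3
          · exact hconv a haI v hv2 w hw2 _ b2
          · exact hconv j (hmem j hj) u hu2 v hv1 _ b1
          · exact hconv a haI v hv2 w hw2 _ b2)
      rw [Set.mem_iInter₂] at hg
      refine ⟨g, ?_⟩
      rw [Set.mem_iInter₂]
      intro i hi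
      rcases Finset.mem_insert.mp hi with rfl | hit
      · obtain ⟨j, hj⟩ := htne
        exact (hg j hj).2
      · exact (hg i hit).1

end gates

section hull

lemma hull_convex (A : Set V) : GraphConvex G (ConvexHullG G A) := by
  intro x hx y hy w hw
  rw [ConvexHullG, Set.mem_sInter] at hx hy ⊢
  intro Z hZ
  exact hZ.1 x (hx Z hZ) y (hy Z hZ) w hw

lemma subset_hull (A : Set V) : A ⊆ ConvexHullG G A := by
  intro x hx
  rw [ConvexHullG, Set.mem_sInter]
  intro Z hZ
  exact hZ.2 hx

lemma hull_min {A Z : Set V} (hZ : GraphConvex G Z) (hAZ : A ⊆ Z) : ConvexHullG G A ⊆ Z := by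
  intro x hx
  rw [ConvexHullG, Set.mem_sInter] at hx
  exact hx Z ⟨hZ, hAZ⟩

lemma hull_mono {A B : Set V} (hAB : A ⊆ B) : ConvexHullG G A ⊆ ConvexHullG G B := by
  intro x hx
  rw [ConvexHullG, Set.mem_sInter] at hx ⊢
  intro Z hZ
  exact hx Z ⟨hZ.1, hAB.trans hZ.2⟩

end hull


section main
variable (hm : IsMedianFn G m)
include hm

omit hm in
lemma iInter_convex {ι : Type*} (A : ι → Set V) (h : ∀ i, GraphConvex G (A i)) :
    GraphConvex G (⋂ i, A i) := by
  intro x hx y hy w hw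
  rw [Set.mem_iInter] at hx hy ⊢
  exact fun i => h i x (hx i) y (hy i) w hw

omit hm in
lemma inter_convex {A B : Set V} (hA : GraphConvex G A) (hB : GraphConvex G B) :
    GraphConvex G (A ∩ B) :=
  fun x hx y hy w hw => ⟨hA x hx.1 y hy.1 w hw, hB x hx.2 y hy.2 w hw⟩

omit hm in
lemma univ_convex : GraphConvex G (Set.univ : Set V) := fun _ _ _ _ _ _ => Set.mem_univ _

lemma hull_nbhd_one {dd : ℕ} (hdim : CubeDimLE G dd) {C : Set V}
    (hC : GraphConvex G C) (hne : C.Nonempty) {v : V}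
    (hv : v ∈ ConvexHullG G (Nbhd G C 1)) : ∃ c ∈ C, G.dist v c ≤ dd := by
  classical
  obtain ⟨p, hpC, hgate, hmin⟩ := exists_gate hm hC hne v
  obtain ⟨c, hc0, hck, hc⟩ := exists_geodesic hm v p
  set k := G.dist v p with hk
  refine ⟨p, hpC, ?_⟩
  -- the walls crossed by the geodesic
  set H : ℕ → Set V := fun i => Wside G (c i) (c (i+1)) with hH
  have hedge : ∀ i, i < k → G.dist (c i) (c (i+1)) = 1 := by
    intro i hik; have := hc i (i+1) (by omega) (by omega); omega
  have hHhalf : ∀ i, i < k → IsHalf G (H i) := fun i hik => ⟨c i, c (i+1), hedge i hik, rfl⟩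
  have hvH : ∀ i, i < k → v ∈ H i := by
    intro i hik
    have h1 : G.dist v (c (i+1)) = i+1-0 := by
      have := hc 0 (i+1) (by omega) (by omega); rw [hc0] at this; exact this
    have h2 : G.dist v (c i) = i-0 := by
      have := hc 0 i (by omega) (by omega); rw [hc0] at this; exact this
    show G.dist v (c (i+1)) = G.dist v (c i) + 1
    omega
  have hCH : ∀ i, i < k → ∀ cc ∈ C, cc ∉ H i := by
    intro i hik cc hcc
    have hvci : G.dist v (c i) + G.dist (c i) p = k := by
      have h1 : G.dist v (c i) = i-0 := by
        have := hc 0 i (by omega) (by omega); rw [hc0] at this; exact this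
      have h2 : G.dist (c i) p = k - i := by
        have := hc i k (by omega) (by omega); rw [hck] at this; exact this
      omega
    have hvci1 : G.dist v (c (i+1)) + G.dist (c (i+1)) p = k := by
      have h1 : G.dist v (c (i+1)) = i+1-0 := by
        have := hc 0 (i+1) (by omega) (by omega); rw [hc0] at this; exact this
      have h2 : G.dist (c (i+1)) p = k - (i+1) := by
        have := hc (i+1) k (by omega) (by omega); rw [hck] at this; exact this
      omega
    have e1 := btw_trans hm (hgate cc hcc) hvci
    have e2 := btw_trans hm (hgate cc hcc) hvci1
    have h2 : G.dist (c i) p = k - i := by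
      have := hc i k (by omega) (by omega); rw [hck] at this; exact this
    have h2' : G.dist (c (i+1)) p = k - (i+1) := by
      have := hc (i+1) k (by omega) (by omega); rw [hck] at this; exact this
    have d1 := dc G cc (c i); have d2 := dc G cc (c (i+1))
    intro hmem
    have hmem' : G.dist cc (c (i+1)) = G.dist cc (c i) + 1 := hmem
    omega
  have hpH : ∀ i, i < k → p ∉ H i := fun i hik => hCH i hik p hpC
  have hHne : ∀ i j, i < k → j < k → i ≠ j → H i ≠ H j := by
    have key : ∀ i j, i < j → j < k → H i ≠ H j := by
      intro i j hij hjk hEq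
      have h1 : (c j) ∈ H j := by
        show G.dist (c j) (c (j+1)) = G.dist (c j) (c j) + 1
        rw [SimpleGraph.dist_self]
        have := hc j (j+1) (by omega) (by omega); omega
      rw [← hEq] at h1
      have h1' : G.dist (c j) (c (i+1)) = G.dist (c j) (c i) + 1 := h1
      have h2 : G.dist (c (i+1)) (c j) = j - (i+1) := hc (i+1) j (by omega) (by omega)
      have h3 : G.dist (c i) (c j) = j - i := hc i j (by omega) (by omega)
      rw [dc G (c j) (c (i+1)), dc G (c j) (c i)] at h1'
      omega
    intro i j hik hjk hij
    rcases Nat.lt_or_ge i j with h | h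
    · exact key i j h hjk
    · exact fun hEq => (key j i (by omega) hik) hEq.symm
  -- sep v p is exactly the set of walls crossed
  have hrange : Set.range (fun i : Fin k => H i) = sep G v p := by
    have hsub : Set.range (fun i : Fin k => H i) ⊆ sep G v p := by
      rintro h ⟨i, rfl⟩
      exact ⟨hHhalf i i.isLt, hvH i i.isLt, hpH i i.isLt⟩
    have hinj : Function.Injective (fun i : Fin k => H i) := by
      intro i j hEq
      by_contra hne'
      exact hHne i j i.isLt j.isLt (fun hc' => hne' (Fin.ext hc')) hEq
    have hcard : (Set.range (fun i : Fin k => H i)).ncard = k := by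
      rw [← Set.image_univ, Set.ncard_image_of_injective _ hinj, Set.ncard_univ,
        Nat.card_eq_fintype_card, Fintype.card_fin]
    exact (Set.eq_of_subset_of_ncard_le hsub
      (by rw [hcard, ncard_sep hm]) (sep_finite hm v p)).symm ▸ rfl
  -- crossing points
  have hcross : ∀ i, i < k → ∃ u, u ∈ H i ∧ ∀ j, j < k → j ≠ i → u ∉ H j := by
    intro i hik
    have hnotsub : ¬ (Nbhd G C 1 ⊆ (H i)ᶜ) := by
      intro hsub
      have hconv : GraphConvex G ((H i)ᶜ) := by
        rw [hH]
        rw [compl_Wside hm (hedge i hik)]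
        exact Wside_convex hm (by rw [dc G (c (i+1)) (c i)]; exact hedge i hik)
      have := hull_min hconv hsub hv
      exact this (hvH i hik)
    obtain ⟨u, huN, huH⟩ := Set.not_subset.mp hnotsub
    rw [Set.notMem_compl_iff] at huH
    obtain ⟨cu, hcuC, hducu⟩ := huN
    have hune : u ≠ cu := fun hEq => (hCH i hik cu hcuC) (hEq ▸ huH)
    have hedge2 : G.dist u cu = 1 := by
      have h0 : G.dist u cu ≠ 0 := fun h => hune (dist0 hm h)
      omega
    refine ⟨u, huH, ?_⟩
    intro j hjk hji huHj
    have hiff1 := wall_transfer hm (G.dist u (c i)) (hedge i hik) hedge2 huH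
      ((not_Wside_iff hm (hedge i hik) cu).mp (hCH i hik cu hcuC)) rfl
    have hiff2 := wall_transfer hm (G.dist u (c j)) (hedge j hjk) hedge2 huHj
      ((not_Wside_iff hm (hedge j hjk) cu).mp (hCH j hjk cu hcuC)) rfl
    have : H i = H j := by
      ext z; rw [hH]
      constructor
      · intro hz; exact (hiff2 z).mpr ((hiff1 z).mp hz)
      · intro hz; exact (hiff1 z).mpr ((hiff2 z).mp hz)
    exact hHne i j hik hjk (fun h => hji h.symm) this
  -- the interval between v and p
  set Iv : Set V := {w | G.dist v w + G.dist w p = G.dist v p} with hIvdef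
  have hIvconv : GraphConvex G Iv := interval_convex hm v p
  have hvIv : v ∈ Iv := by
    show G.dist v v + G.dist v p = G.dist v p
    rw [SimpleGraph.dist_self]; omega
  have hpIv : p ∈ Iv := by
    show G.dist v p + G.dist p p = G.dist v p
    rw [SimpleGraph.dist_self]; omega
  set J : (Fin k → Bool) → Set V :=
    fun s => Iv ∩ ⋂ (i : Fin k), (if s i = false then (H i.val)ᶜ else Set.univ) with hJdef
  have hcomplconv : ∀ i, i < k → GraphConvex G ((H i)ᶜ) := by
    intro i hik
    have : (H i)ᶜ = Wside G (c (i+1)) (c i) := compl_Wside hm (hedge i hik)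
    rw [this]
    exact Wside_convex hm (by rw [dc G (c (i+1)) (c i)]; exact hedge i hik)
  have hJconv : ∀ s, GraphConvex G (J s) := by
    intro s
    apply inter_convex hIvconv
    apply iInter_convex
    intro i
    by_cases hsi : s i = false
    · rw [if_pos hsi]; exact hcomplconv i.val i.isLt
    · rw [if_neg hsi]; exact univ_convex
  have hpJ : ∀ s, p ∈ J s := by
    intro s
    refine ⟨hpIv, ?_⟩
    rw [Set.mem_iInter]; intro i
    by_cases hsi : s i = false
    · rw [if_pos hsi]; exact hpH i.val i.isLt
    · rw [if_neg hsi]; exact Set.mem_univ p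
  have hgates : ∀ s, ∃ w, (w ∈ J s) ∧ ∀ cc ∈ J s, G.dist v w + G.dist w cc = G.dist v cc := by
    intro s
    obtain ⟨w, hw1, hw2, -⟩ := exists_gate hm (hJconv s) ⟨p, hpJ s⟩ v
    exact ⟨w, hw1, hw2⟩
  choose f hfJ hfgate using hgates
  have hfIv : ∀ s, G.dist v (f s) + G.dist (f s) p = G.dist v p := fun s => (hfJ s).1
  have hsepJ : ∀ s, sep G v (f s) = {h : Set V | IsHalf G h ∧ v ∈ h ∧ h ∩ J s = ∅} :=
    fun s => sep_gate hm (hfJ s) (hfgate s)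
  have hsepsub : ∀ s, sep G v (f s) ⊆ sep G v p := fun s => (btw_sep_subset hm (hfIv s)).1
  -- the walls separating v from f s are exactly those indexed by coordinates where s is false
  have hchar : ∀ s (i : Fin k), (H i.val ∈ sep G v (f s) ↔ s i = false) := by
    intro s i
    constructor
    · intro hmem
      by_contra hsi
      rw [hsepJ s] at hmem
      obtain ⟨-, -, hdisj⟩ := hmem
      -- Use the Helly property to find a point in H i ∩ J s
      obtain ⟨u, huHi, huNot⟩ := hcross i.val i.isLt
      set F : Finset (Set V) := insert (H i.val) (insert Iv
        ((Finset.univ.filter (fun j : Fin k => s j = false)).image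
          (fun j : Fin k => (H j.val)ᶜ))) with hFdef
      have hmemF : ∀ X ∈ F, X = H i.val ∨ X = Iv ∨
          ∃ j : Fin k, s j = false ∧ X = (H j.val)ᶜ := by
        intro X hX
        simp only [hFdef, Finset.mem_insert, Finset.mem_image, Finset.mem_filter,
          Finset.mem_univ, true_and] at hX
        rcases hX with h | h | ⟨j, hj1, hj2⟩
        · exact Or.inl h
        · exact Or.inr (Or.inl h)
        · exact Or.inr (Or.inr ⟨j, hj1, hj2.symm⟩)
      have hwitness : ∀ X ∈ F, ∀ Y ∈ F, (X ∩ Y).Nonempty := by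
        have hvtriv : ∀ X, X = H i.val ∨ X = Iv → v ∈ X := by
          rintro X (rfl | rfl)
          · exact hvH i.val i.isLt
          · exact hvIv
        have hptriv : ∀ X, X = Iv ∨ (∃ j : Fin k, s j = false ∧ X = (H j.val)ᶜ) → p ∈ X := by
          rintro X (rfl | ⟨j, hj1, rfl⟩)
          · exact hpIv
          · exact hpH j.val j.isLt
        have hucompl : ∀ j : Fin k, s j = false → u ∈ (H j.val)ᶜ := by
          intro j hj
          apply huNot j.val j.isLt
          intro hEq
          apply hsi
          have : j = i := Fin.ext hEq
          rw [← this]; exact hj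
        intro X hX Y hY
        rcases hmemF X hX with hX' | hX' | ⟨j, hj1, hj2⟩ <;>
          rcases hmemF Y hY with hY' | hY' | ⟨j', hj1', hj2'⟩
        · exact ⟨v, hvtriv X (Or.inl hX'), hvtriv Y (Or.inl hY')⟩
        · exact ⟨v, hvtriv X (Or.inl hX'), hvtriv Y (Or.inr hY')⟩
        · subst hX'; subst hj2'
          exact ⟨u, huHi, hucompl j' hj1'⟩
        · exact ⟨v, hvtriv X (Or.inr hX'), hvtriv Y (Or.inl hY')⟩
        · exact ⟨v, hvtriv X (Or.inr hX'), hvtriv Y (Or.inr hY')⟩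
        · exact ⟨p, hptriv X (Or.inl hX'), hptriv Y (Or.inr ⟨j', hj1', hj2'⟩)⟩
        · subst hY'; subst hj2
          exact ⟨u, hucompl j hj1, huHi⟩
        · exact ⟨p, hptriv X (Or.inr ⟨j, hj1, hj2⟩), hptriv Y (Or.inl hY')⟩
        · exact ⟨p, hptriv X (Or.inr ⟨j, hj1, hj2⟩), hptriv Y (Or.inr ⟨j', hj1', hj2'⟩)⟩
      have hFconv : ∀ X ∈ F, GraphConvex G (id X) := by
        intro X hX
        rcases hmemF X hX with rfl | rfl | ⟨j, hj1, rfl⟩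
        · exact IsHalf_convex hm (hHhalf i.val i.isLt)
        · exact hIvconv
        · exact hcomplconv j.val j.isLt
      have hFne : F.Nonempty := ⟨H i.val, by rw [hFdef]; exact Finset.mem_insert_self _ _⟩
      obtain ⟨z, hz⟩ := helly (ι := Set V) hm F hFne id hFconv
        (fun X hX Y hY => hwitness X hX Y hY)
      rw [Set.mem_iInter₂] at hz
      have hzHi : z ∈ H i.val := hz (H i.val) (by rw [hFdef]; exact Finset.mem_insert_self _ _)
      have hzIv : z ∈ Iv := by
        apply hz Iv
        rw [hFdef]
        exact Finset.mem_insert_of_mem (Finset.mem_insert_self _ _)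
      have hzJ : z ∈ J s := by
        refine ⟨hzIv, ?_⟩
        rw [Set.mem_iInter]; intro j
        by_cases hsj : s j = false
        · rw [if_pos hsj]
          refine hz ((H j.val)ᶜ) ?_
          rw [hFdef]
          refine Finset.mem_insert_of_mem (Finset.mem_insert_of_mem ?_)
          exact Finset.mem_image.mpr ⟨j, Finset.mem_filter.mpr ⟨Finset.mem_univ j, hsj⟩, rfl⟩
        · rw [if_neg hsj]; exact Set.mem_univ z
      have : z ∈ H i.val ∩ J s := ⟨hzHi, hzJ⟩
      rw [hdisj] at this
      exact this
    · intro hsi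
      rw [hsepJ s]
      refine ⟨hHhalf i.val i.isLt, hvH i.val i.isLt, ?_⟩
      rw [Set.eq_empty_iff_forall_notMem]
      rintro z ⟨hz1, hz2⟩
      obtain ⟨-, hz3⟩ := hz2
      rw [Set.mem_iInter] at hz3
      have := hz3 i
      rw [if_pos hsi] at this
      exact this hz1
  have hfmem : ∀ s (i : Fin k), (f s ∈ H i.val ↔ s i = true) := by
    intro s i
    constructor
    · intro hmem
      by_contra hsi
      have hsi' : s i = false := by
        cases hsival : s i
        · rfl
        · exact absurd hsival hsi
      have := (hchar s i).mpr hsi'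
      exact this.2.2 hmem
    · intro hsi
      by_contra hmem
      have hin : H i.val ∈ sep G v (f s) := ⟨hHhalf i.val i.isLt, hvH i.val i.isLt, hmem⟩
      have := (hchar s i).mp hin
      rw [hsi] at this
      simp at this
  -- the cube map realizes Hamming distances
  have hdist : ∀ s t, G.dist (f s) (f t) = hammingDist s t := by
    intro s t
    set FF : Fin k → Set V := fun i => if s i = true then H i.val else (H i.val)ᶜ with hFFdef
    have hFFinj : Function.Injective FF := by
      intro i j hEq
      by_contra hne'
      have hij : (i : ℕ) ≠ (j : ℕ) := fun h => hne' (Fin.ext h)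
      have hHij := hHne i.val j.val i.isLt j.isLt hij
      rw [hFFdef] at hEq
      simp only at hEq
      by_cases hsi : s i = true <;> by_cases hsj : s j = true
      · rw [if_pos hsi, if_pos hsj] at hEq; exact hHij hEq
      · rw [if_pos hsi, if_neg hsj] at hEq
        have : v ∈ (H j.val)ᶜ := hEq ▸ hvH i.val i.isLt
        exact this (hvH j.val j.isLt)
      · rw [if_neg hsi, if_pos hsj] at hEq
        have : v ∈ (H i.val)ᶜ := hEq ▸ hvH j.val j.isLt
        exact this (hvH i.val i.isLt)
      · rw [if_neg hsi, if_neg hsj] at hEq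
        exact hHij (compl_injective hEq)
    have hsepEq : sep G (f s) (f t) = FF '' {i : Fin k | s i ≠ t i} := by
      ext h
      constructor
      · rintro ⟨hh, hs', ht'⟩
        by_cases hvh : v ∈ h
        · have hmem : h ∈ sep G v (f t) := ⟨hh, hvh, ht'⟩
          have hr : h ∈ sep G v p := hsepsub t hmem
          rw [← hrange] at hr
          obtain ⟨j, hj⟩ := hr
          simp only at hj
          have htj : t j = false := (hchar t j).mp (by rw [hj]; exact hmem)
          have hsj : s j = true := (hfmem s j).mp (by rw [hj]; exact hs')
          refine ⟨j, ?_, ?_⟩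
          · rw [Set.mem_setOf_eq, hsj, htj]; simp
          · rw [hFFdef]; simp only; rw [if_pos hsj]; exact hj
        · have hhc := IsHalf_compl hm hh
          have hmem : hᶜ ∈ sep G v (f s) := ⟨hhc, hvh, fun hcon => hcon hs'⟩
          have hr : hᶜ ∈ sep G v p := hsepsub s hmem
          rw [← hrange] at hr
          obtain ⟨j, hj⟩ := hr
          simp only at hj
          have hsj : s j = false := (hchar s j).mp (by rw [hj]; exact hmem)
          have htj : t j = true := (hfmem t j).mp (by rw [hj]; exact ht')
          refine ⟨j, ?_, ?_⟩
          · rw [Set.mem_setOf_eq, hsj, htj]; simp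
          · rw [hFFdef]; simp only
            rw [if_neg (by rw [hsj]; simp)]
            rw [hj, compl_compl]
      · rintro ⟨j, hjS, rfl⟩
        rw [Set.mem_setOf_eq] at hjS
        rw [hFFdef]; simp only
        by_cases hsj : s j = true
        · have htj : t j = false := by
            cases htjval : t j
            · rfl
            · rw [hsj, htjval] at hjS; exact absurd rfl hjS
          rw [if_pos hsj]
          refine ⟨hHhalf j.val j.isLt, (hfmem s j).mpr hsj, fun hcon => ?_⟩
          have := (hfmem t j).mp hcon
          rw [htj] at this
          simp at this
        · have hsj' : s j = false := by
            cases hsjval : s j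
            · rfl
            · exact absurd hsjval hsj
          have htj : t j = true := by
            cases htjval : t j
            · rw [hsj', htjval] at hjS; exact absurd rfl hjS
            · rfl
          rw [if_neg hsj]
          refine ⟨IsHalf_compl hm (hHhalf j.val j.isLt), ?_, ?_⟩
          · intro hcon
            have := (hfmem s j).mp hcon
            rw [hsj'] at this
            simp at this
          · intro hcon
            exact hcon ((hfmem t j).mpr htj)
    rw [← ncard_sep hm, hsepEq, Set.ncard_image_of_injective _ hFFinj]
    have hSfin : {i : Fin k | s i ≠ t i} = ↑(Finset.univ.filter fun i : Fin k => s i ≠ t i) := by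
      ext i; simp
    rw [hSfin, Set.ncard_coe_finset]
    rfl
  have hkd : k ≤ dd := hdim k f hdist
  exact hkd


end main


section final
variable (hm : IsMedianFn G m)
include hm

lemma hull_nbhd {dd : ℕ} (hdim : CubeDimLE G dd) {C : Set V}
    (hC : GraphConvex G C) (hne : C.Nonempty) :
    ∀ r v, v ∈ ConvexHullG G (Nbhd G C r) → ∃ z ∈ C, G.dist v z ≤ dd * r := by
  intro r
  induction r with
  | zero =>
    intro v hv
    have hsub : Nbhd G C 0 ⊆ C := by
      rintro u ⟨a, ha, hd⟩
      have : u = a := dist0 hm (by omega)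
      rw [this]; exact ha
    exact ⟨v, hull_min hC hsub hv, by rw [SimpleGraph.dist_self]; omega⟩
  | succ r ih =>
    intro v hv
    set C' := ConvexHullG G (Nbhd G C r) with hC'def
    have hC'conv : GraphConvex G C' := hull_convex _
    have hC'ne : C'.Nonempty := by
      obtain ⟨z, hz⟩ := hne
      exact ⟨z, subset_hull _ ⟨z, hz, by rw [SimpleGraph.dist_self]; omega⟩⟩
    have hsub : Nbhd G C (r+1) ⊆ Nbhd G C' 1 := by
      rintro u ⟨a, ha, hd⟩
      by_cases h : G.dist u a ≤ r
      · exact ⟨u, subset_hull _ ⟨a, ha, h⟩, by rw [SimpleGraph.dist_self]; omega⟩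
      · obtain ⟨u', hu1, hu2⟩ := exists_step hm (u := u) (a := a) (by omega)
        exact ⟨u', subset_hull _ ⟨a, ha, by omega⟩, by omega⟩
    have hv' : v ∈ ConvexHullG G (Nbhd G C' 1) := hull_mono hsub hv
    obtain ⟨c', hc'1, hc'2⟩ := hull_nbhd_one hm hdim hC'conv hC'ne hv'
    obtain ⟨z, hz1, hz2⟩ := ih c' hc'1
    refine ⟨z, hz1, ?_⟩
    have ht := tri hm v c' z
    have hmul : dd * (r+1) = dd * r + dd := by ring
    omega

end final

end MG

/-- Coarse Helly property: finitely many pairwise `R`-close nonempty convex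
subsets of a median graph of cube dimension at most `d` admit a vertex that is
`d·R`-close to each of them. -/
theorem stmt7 {V : Type*} (G : SimpleGraph V) (m : V → V → V → V)
    (hm : IsMedianFn G m) (d : ℕ) (hdim : CubeDimLE G d) (R : ℕ)
    (n : ℕ) (hn : 1 ≤ n) (Z : Fin n → Set V)
    (hne : ∀ i, (Z i).Nonempty) (hconv : ∀ i, GraphConvex G (Z i))
    (hclose : ∀ i j, ∃ z ∈ Z i, ∃ z' ∈ Z j, G.dist z z' ≤ R) :
    ∃ g : V, ∀ i, ∃ z ∈ Z i, G.dist g z ≤ d * R := by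
  classical
  set T : Fin n → Set V := fun i => ConvexHullG G (Nbhd G (Z i) R) with hTdef
  have hTconv : ∀ i, GraphConvex G (T i) := fun i => MG.hull_convex _
  have hpair : ∀ i ∈ (Finset.univ : Finset (Fin n)), ∀ j ∈ (Finset.univ : Finset (Fin n)),
      (T i ∩ T j).Nonempty := by
    intro i _ j _
    obtain ⟨z, hz, z', hz', hd⟩ := hclose i j
    refine ⟨z', MG.subset_hull _ ⟨z, hz, ?_⟩, MG.subset_hull _ ⟨z', hz', ?_⟩⟩
    · rw [MG.dc G z' z]; exact hd
    · rw [SimpleGraph.dist_self]; omega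
  have hne' : (Finset.univ : Finset (Fin n)).Nonempty := ⟨⟨0, hn⟩, Finset.mem_univ _⟩
  obtain ⟨g, hg⟩ := MG.helly hm Finset.univ hne' T (fun i _ => hTconv i) hpair
  rw [Set.mem_iInter₂] at hg
  refine ⟨g, fun i => ?_⟩
  exact MG.hull_nbhd hm hdim (hconv i) (hne i) R g (hg i (Finset.mem_univ i))
end

section
/- Let a group Γ act on a set S with finitely many orbits, and let T be a symmetric relation on S that is Γ-invariant, i.e., T(s, t) holds if and only if T(g·s, g·t) holds for all g ∈ Γ. Then the following are equivalent: (i) there is a finite partition S = S_1 ⊔ … ⊔ S_χ into Γ-invariant subsets such that any two distinct elements of the same part S_i are T-related; (ii) for every s ∈ S and every g ∈ Γ, either g·s = s or T(s, g·s) holds. -/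
/-- A BBF colouring with respect to an invariant symmetric relation `T` exists
if and only if every element is `T`-related to each of its nontrivial
translates. -/
theorem stmt8 {Γ S : Type*} [Group Γ] [MulAction Γ S]
    (horb : Finite (Quotient (MulAction.orbitRel Γ S)))
    (T : S → S → Prop) (hsymm : ∀ s t, T s t → T t s)
    (hinv : ∀ (g : Γ) (s t : S), T s t ↔ T (g • s) (g • t)) :
    (∃ (χ : ℕ) (P : Fin χ → Set S),
        (∀ s : S, ∃! i, s ∈ P i) ∧
        (∀ i (g : Γ), ∀ s ∈ P i, g • s ∈ P i) ∧
        (∀ i, ∀ s ∈ P i, ∀ t ∈ P i, s ≠ t → T s t)) ↔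
      (∀ (s : S) (g : Γ), g • s = s ∨ T s (g • s)) := by
  constructor
  · rintro ⟨χ, P, hpart, hinvP, hT⟩ s g
    obtain ⟨i, hi, -⟩ := hpart s
    by_cases h : g • s = s
    · exact Or.inl h
    · exact Or.inr (hsymm _ _ (hT i _ (hinvP i g s hi) _ hi h))
  · intro h
    have : Fintype (Quotient (MulAction.orbitRel Γ S)) := Fintype.ofFinite _
    let e := Fintype.equivFin (Quotient (MulAction.orbitRel Γ S))
    refine ⟨Fintype.card (Quotient (MulAction.orbitRel Γ S)),
      fun i => {s | e (Quotient.mk _ s) = i}, ?_, ?_, ?_⟩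
    · intro s
      exact ⟨e (Quotient.mk _ s), rfl, fun i hi => hi.symm⟩
    · intro i g s hs
      have : (Quotient.mk (MulAction.orbitRel Γ S) (g • s)) = Quotient.mk _ s :=
        Quotient.sound ⟨g, rfl⟩
      simpa [Set.mem_setOf_eq, this] using hs
    · intro i s hs t ht hne
      have hq : (Quotient.mk (MulAction.orbitRel Γ S) s) = Quotient.mk _ t := by
        apply e.injective
        simp only [Set.mem_setOf_eq] at hs ht
        rw [hs, ht]
      obtain ⟨g, hg⟩ := Quotient.exact hq
      rcases h t g with h1 | h1
      · exact absurd (hg ▸ h1 : s = t) hne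
      · exact hsymm _ _ (hg ▸ h1)
end

section
/- Let G be a median graph on vertex set V, let Y ⊆ V be a median subalgebra, let y, y' ∈ Y, and let p_0, p_1, …, p_n be a sequence of points of Y with p_0 = y, p_n = y', and dist(p_i, p_{i+1}) ≤ 1 for all i. Define p'_i = m(y, y', p_i). Then p'_0 = y and p'_n = y'; each p'_i lies in Y and lies in the interval I(y, y') = {w ∈ V : dist(y, w) + dist(w, y') = dist(y, y')}; and dist(p'_i, p'_{i+1}) ≤ 1 for all i. -/
section MedianAux

variable {V : Type*} {G : SimpleGraph V} {m : V → V → V → V}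

private lemma tri' (hm : IsMedianFn G m) (x y z : V) :
    G.dist x z ≤ G.dist x y + G.dist y z := hm.1.dist_triangle

private lemma cm (x y : V) : G.dist x y = G.dist y x := SimpleGraph.dist_comm

private lemma dz (hm : IsMedianFn G m) {x y : V} (h : G.dist x y = 0) : x = y :=
  (hm.1.dist_eq_zero_iff).mp h

private lemma medc (hm : IsMedianFn G m) (x y z : V) :
    G.dist x (m x y z) + G.dist (m x y z) y = G.dist x y ∧
    G.dist y (m x y z) + G.dist (m x y z) z = G.dist y z ∧
    G.dist x (m x y z) + G.dist (m x y z) z = G.dist x z := (hm.2 x y z).1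

private lemma medu (hm : IsMedianFn G m) (x y z w : V)
    (h1 : G.dist x w + G.dist w y = G.dist x y)
    (h2 : G.dist y w + G.dist w z = G.dist y z)
    (h3 : G.dist x w + G.dist w z = G.dist x z) : w = m x y z :=
  (hm.2 x y z).2 w ⟨h1, h2, h3⟩

/-- No vertex is equidistant from the two endpoints of an edge. -/
private lemma neq_of_dist_one (hm : IsMedianFn G m) {x y : V}
    (h : G.dist x y = 1) (z : V) : G.dist z x ≠ G.dist z y := by
  intro he
  obtain ⟨c1, c2, c3⟩ := medc hm x y z
  have e1 := cm (G := G) x z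
  have e2 := cm (G := G) y z
  have e3 := cm (G := G) y (m x y z)
  omega

/-- If `w ∈ [a,b]` and `q ∈ [a,w]` then `q ∈ [a,b]` and `w ∈ [q,b]`. -/
private lemma between_trans (hm : IsMedianFn G m) {a b w q : V}
    (hw : G.dist a w + G.dist w b = G.dist a b)
    (hq : G.dist a q + G.dist q w = G.dist a w) :
    G.dist a q + G.dist q b = G.dist a b ∧
    G.dist q w + G.dist w b = G.dist q b := by
  have t1 := tri' hm q w b
  have t2 := tri' hm a q b
  omega

/-- 2-convexity of intervals. -/
private lemma two_convex (hm : IsMedianFn G m) {a b u v t : V}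
    (hu : G.dist a u + G.dist u b = G.dist a b)
    (hv : G.dist a v + G.dist v b = G.dist a b)
    (huv : G.dist u v = 2)
    (ht1 : G.dist u t = 1) (ht2 : G.dist t v = 1) :
    G.dist a t + G.dist t b = G.dist a b := by
  have nau := neq_of_dist_one hm ht1 a
  have nbu := neq_of_dist_one hm ht1 b
  have nav := neq_of_dist_one hm ht2 a
  have nbv := neq_of_dist_one hm ht2 b
  have ctu := cm (G := G) t u
  have ctv := cm (G := G) t v
  have ta1 := tri' hm a u t
  have ta2 := tri' hm a t u
  have tb1 := tri' hm b u t
  have tb2 := tri' hm b t u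
  have ta3 := tri' hm a v t
  have ta4 := tri' hm a t v
  have tb3 := tri' hm b v t
  have tb4 := tri' hm b t v
  have cbu := cm (G := G) b u
  have cba := cm (G := G) b a
  have cbv := cm (G := G) b v
  have cbt := cm (G := G) b t
  have cat' := cm (G := G) a t
  have cua := cm (G := G) u a
  by_cases h1 : G.dist a t + 1 = G.dist a u
  · exact (between_trans hm hu (by omega : G.dist a t + G.dist t u = G.dist a u)).1
  by_cases h2 : G.dist b t + 1 = G.dist b u
  · have hu' : G.dist b u + G.dist u a = G.dist b a := by omega
    have := (between_trans hm hu'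
      (by omega : G.dist b t + G.dist t u = G.dist b u)).1
    have := cm (G := G) t a
    omega
  by_cases h3 : G.dist a t + 1 = G.dist a v
  · exact (between_trans hm hv (by omega : G.dist a t + G.dist t v = G.dist a v)).1
  by_cases h4 : G.dist b t + 1 = G.dist b v
  · have hv' : G.dist b v + G.dist v a = G.dist b a := by
      have := cm (G := G) v a
      have := cm (G := G) a v
      omega
    have := (between_trans hm hv'
      (by omega : G.dist b t + G.dist t v = G.dist b v)).1
    have := cm (G := G) t a
    omega
  -- bad case : t is "above" u and v relative to both a and b
  exfalso
  have e1 : G.dist a t = G.dist a u + 1 := by omega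
  have e2 : G.dist b t = G.dist b u + 1 := by omega
  have e3 : G.dist a u = G.dist a v := by omega
  have e4 : G.dist b u = G.dist b v := by omega
  obtain ⟨q1, q2, q3⟩ := medc hm a u v
  obtain ⟨r1, r2, r3⟩ := medc hm b u v
  set q := m a u v with hq
  set r := m b u v with hr
  have cuq := cm (G := G) u q
  have cur := cm (G := G) u r
  -- values for q
  have hqu : G.dist q u = 1 := by omega
  have hqv : G.dist q v = 1 := by omega
  have haq : G.dist a q + 1 = G.dist a u := by omega
  -- values for r
  have hru : G.dist r u = 1 := by omega
  have hrv : G.dist r v = 1 := by omega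
  have hbr : G.dist b r + 1 = G.dist b u := by omega
  -- q, r ∈ [a,b]
  have hqab : G.dist a q + G.dist q b = G.dist a b :=
    (between_trans hm hu (by omega : G.dist a q + G.dist q u = G.dist a u)).1
  have hrab : G.dist b r + G.dist r a = G.dist b a :=
    (between_trans hm (by omega : G.dist b u + G.dist u a = G.dist b a)
      (by omega : G.dist b r + G.dist r u = G.dist b u)).1
  -- pairwise distances among q, r, t are all 2
  have tqt1 := tri' hm q u t
  have tqt2 := tri' hm a q t
  have hqt : G.dist q t = 2 := by omega
  have trt1 := tri' hm r u t
  have trt2 := tri' hm b r t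
  have cbq := cm (G := G) b q
  have cbr := cm (G := G) b r
  have hrt : G.dist r t = 2 := by omega
  have tqr1 := tri' hm q u r
  have tqr2 := tri' hm b r q
  have cqb := cm (G := G) q b
  have cra := cm (G := G) r a
  have crq := cm (G := G) r q
  have hqr : G.dist q r = 2 := by omega
  -- both u and v are medians of (q, r, t)
  have hut : G.dist u t = 1 := ht1
  have hvt : G.dist v t = 1 := by omega
  have cvr := cm (G := G) v r
  have cvt := cm (G := G) v t
  have hu' : u = m q r t := by
    refine medu hm q r t u ?_ ?_ ?_ <;> omega
  have hv' : v = m q r t := by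
    refine medu hm q r t v ?_ ?_ ?_ <;> omega
  have : u = v := hu'.trans hv'.symm
  rw [this] at huv
  rw [SimpleGraph.dist_self] at huv
  omega

/-- A step towards `z` along a geodesic. -/
private lemma step_vertex (hm : IsMedianFn G m) {u z : V} (h : 0 < G.dist u z) :
    ∃ u₁, G.dist u u₁ = 1 ∧ G.dist u₁ z + 1 = G.dist u z := by
  obtain ⟨w, hw⟩ := hm.1.exists_walk_length_eq_dist u z
  cases w with
  | nil =>
    rw [SimpleGraph.dist_self] at h
    omega
  | @cons _ u₁ _ hadj q =>
    refine ⟨u₁, (SimpleGraph.dist_eq_one_iff_adj).mpr hadj, ?_⟩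
    have hle := SimpleGraph.dist_le q
    have ht := tri' hm u u₁ z
    have h1 : G.dist u u₁ = 1 := (SimpleGraph.dist_eq_one_iff_adj).mpr hadj
    simp only [SimpleGraph.Walk.length_cons] at hw
    omega

/-- Convexity of intervals. -/
private lemma convex_aux (hm : IsMedianFn G m) (a b : V) : ∀ n : ℕ, ∀ u v z : V,
    G.dist a u + G.dist u b = G.dist a b →
    G.dist a v + G.dist v b = G.dist a b →
    G.dist u v ≤ n →
    G.dist u z + G.dist z v = G.dist u v →
    G.dist a z + G.dist z b = G.dist a b := by
  intro n
  induction n with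
  | zero =>
    intro u v z hu hv hn hz
    have h0 : G.dist u z = 0 := by omega
    obtain rfl := dz hm h0
    exact hu
  | succ n ih =>
    intro u v z hu hv hn hz
    by_cases hnn : G.dist u v ≤ n
    · exact ih u v z hu hv hnn hz
    have huv : G.dist u v = n + 1 := by omega
    by_cases hz0 : G.dist u z = 0
    · obtain rfl := dz hm hz0
      exact hu
    obtain ⟨u₁, h1, h2⟩ := step_vertex hm (Nat.pos_of_ne_zero hz0)
    have t1 := tri' hm u₁ z v
    have t2 := tri' hm u u₁ v
    have hu1v : G.dist u u₁ + G.dist u₁ v = G.dist u v := by omega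
    have key : G.dist a u₁ + G.dist u₁ b = G.dist a b := by
      have nau := neq_of_dist_one hm h1 a
      have nbu := neq_of_dist_one hm h1 b
      have ta1 := tri' hm a u u₁
      have ta2 := tri' hm a u₁ u
      have tb1 := tri' hm b u u₁
      have tb2 := tri' hm b u₁ u
      have cu1u := cm (G := G) u₁ u
      have cba := cm (G := G) b a
      have cbu := cm (G := G) b u
      have cbu1 := cm (G := G) b u₁
      have cu1a := cm (G := G) u₁ a
      have cua := cm (G := G) u a
      by_cases ha : G.dist a u₁ + 1 = G.dist a u
      · exact (between_trans hm hu
          (by omega : G.dist a u₁ + G.dist u₁ u = G.dist a u)).1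
      by_cases hb : G.dist b u₁ + 1 = G.dist b u
      · have := (between_trans hm
          (by omega : G.dist b u + G.dist u a = G.dist b a)
          (by omega : G.dist b u₁ + G.dist u₁ u = G.dist b u)).1
        omega
      have e1 : G.dist a u₁ = G.dist a u + 1 := by omega
      have e2 : G.dist b u₁ = G.dist b u + 1 := by omega
      by_cases hsmall : n + 1 ≤ 2
      · by_cases h0 : G.dist u₁ v = 0
        · obtain rfl := dz hm h0
          exact hv
        · have hd1 : G.dist u₁ v = 1 := by omega
          have huv2 : G.dist u v = 2 := by omega
          exact two_convex hm hu hv huv2 h1 hd1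
      -- main case : n + 1 ≥ 3
      obtain ⟨w1, w2, w3⟩ := medc hm a u₁ v
      set w := m a u₁ v with hwdef
      have hwab : G.dist a w + G.dist w b = G.dist a b :=
        (between_trans hm hv w3).1
      -- u₁ ∈ [u, w] and [u,w] ⊆ [u,v]
      have tw1 := tri' hm u u₁ w
      have tw2 := tri' hm u w v
      have huw : G.dist u w + G.dist w v = G.dist u v := by omega
      have hu1w : G.dist u u₁ + G.dist u₁ w = G.dist u w := by omega
      by_cases hwv : G.dist w v = 0
      · -- w = v, so v ∈ [a, u₁]; pass to the median with b
        have hwv' := dz hm hwv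
        rw [hwv'] at w1
        obtain ⟨x1, x2, x3⟩ := medc hm b u₁ v
        set x := m b u₁ v with hxdef
        have hxab : G.dist a x + G.dist x b = G.dist a b := by
          have c1 := cm (G := G) x a
          have c2 := cm (G := G) b x
          have c3 := cm (G := G) b v
          have c4 := cm (G := G) v a
          have := (between_trans hm
            (by omega : G.dist b v + G.dist v a = G.dist b a) x3).1
          omega
        have tx1 := tri' hm u u₁ x
        have tx2 := tri' hm u x v
        have hux : G.dist u x + G.dist x v = G.dist u v := by omega
        have hu1x : G.dist u u₁ + G.dist u₁ x = G.dist u x := by omega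
        by_cases hxv : G.dist x v = 0
        · exfalso
          have hxv' := dz hm hxv
          rw [hxv'] at x1
          have := cm (G := G) v u₁
          have := cm (G := G) b v
          omega
        · exact ih u x u₁ hu hxab (by omega) hu1x
      · exact ih u w u₁ hu hwab (by omega) hu1w
    have hz1 : G.dist u₁ z + G.dist z v = G.dist u₁ v := by omega
    exact ih u₁ v z key hv (by omega) hz1

/-- Gate property of the median projection onto an interval. -/
private lemma gate (hm : IsMedianFn G m) (a b c w : V)
    (hw : G.dist a w + G.dist w b = G.dist a b) :
    G.dist c w = G.dist c (m a b c) + G.dist (m a b c) w := by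
  obtain ⟨c1, c2, c3⟩ := medc hm a b c
  obtain ⟨u1, u2, u3⟩ := medc hm c w (m a b c)
  set p := m a b c with hpdef
  set u := m c w p with hudef
  have huab : G.dist a u + G.dist u b = G.dist a b :=
    convex_aux hm a b (G.dist w p) w p u hw c1 le_rfl u2
  have cpu := cm (G := G) p u
  have cuc := cm (G := G) u c
  have cpc := cm (G := G) p c
  have cbp := cm (G := G) b p
  have cbc := cm (G := G) b c
  have cbu := cm (G := G) b u
  have hac : G.dist a u + G.dist u c = G.dist a c := by
    have t1 := tri' hm a p u
    have t2 := tri' hm a u c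
    omega
  have hbc : G.dist b u + G.dist u c = G.dist b c := by
    have t1 := tri' hm b p u
    have t2 := tri' hm b u c
    omega
  have hu : u = p := medu hm a b c u huab hbc hac
  rw [hu] at u1
  have := cm (G := G) p w
  omega

/-- The median projection onto an interval is 1-Lipschitz. -/
private lemma med_lipschitz (hm : IsMedianFn G m) (a b c c' : V) :
    G.dist (m a b c) (m a b c') ≤ G.dist c c' := by
  have h1 := gate hm a b c (m a b c') (medc hm a b c').1
  have h2 := gate hm a b c' (m a b c) (medc hm a b c).1
  have t1 := tri' hm c c' (m a b c')
  have t2 := tri' hm c' c (m a b c)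
  have := cm (G := G) (m a b c') (m a b c)
  have := cm (G := G) c' c
  omega

end MedianAux


/-- Projecting a 1-path in a median subalgebra to the interval between its
endpoints yields a 1-path in the subalgebra inside the interval, with the same
endpoints. -/
theorem stmt10 {V : Type*} (G : SimpleGraph V) (m : V → V → V → V)
    (hm : IsMedianFn G m) (Y : Set V) (hsub : IsSubalgebra m Y)
    (y y' : V) (hy : y ∈ Y) (hy' : y' ∈ Y)
    (n : ℕ) (p : ℕ → V) (hp0 : p 0 = y) (hpn : p n = y')
    (hpY : ∀ i ≤ n, p i ∈ Y) (hstep : ∀ i < n, G.dist (p i) (p (i + 1)) ≤ 1) :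
    m y y' (p 0) = y ∧ m y y' (p n) = y' ∧
    (∀ i ≤ n, m y y' (p i) ∈ Y ∧
      G.dist y (m y y' (p i)) + G.dist (m y y' (p i)) y' = G.dist y y') ∧
    ∀ i < n, G.dist (m y y' (p i)) (m y y' (p (i + 1))) ≤ 1 := by
  have h0 : m y y' y = y := by
    symm
    refine (hm.2 y y' y).2 y ⟨?_, ?_, ?_⟩ <;> simp [SimpleGraph.dist_self]
  have h1 : m y y' y' = y' := by
    symm
    refine (hm.2 y y' y').2 y' ⟨?_, ?_, ?_⟩ <;> simp [SimpleGraph.dist_self]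
  refine ⟨by rw [hp0]; exact h0, by rw [hpn]; exact h1,
    fun i hi => ⟨hsub y hy y' hy' _ (hpY i hi), ((hm.2 y y' (p i)).1).1⟩,
    fun i hi => le_trans (med_lipschitz hm y y' (p i) (p (i + 1))) (hstep i hi)⟩
end
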